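/- arXiv:1404.6317 — 3 statements merged into one kernel-verified Lean document; each statement's English description precedes it below -/
import Mathlib

section
/- For every real number D, every real r, every real x, and every polynomial function p : ℝ → ℝ of degree at most 7, one has p(x + rD) = (μp)(x) + (r/2)(δp)(x) + ((r² − 1)/8)(μδ²p)(x) + ((r³ − r)/48)(δ³p)(x) + ((9 − 10r² + r⁴)/384)(μδ⁴p)(x) + ((9r − 10r³ + r⁵)/3840)(δ⁵p)(x) + ((−225 + 259r² − 35r⁴ + r⁶)/46080)(μδ⁶p)(x) + ((−225r + 259r³ − 35r⁵ + r⁷)/645120)(δ⁷p)(x). That is, the septic coupling operator (the truncation of the shift expansion through seventh differences, with coupling label γ = 1) reproduces the shifted value exactly on polynomials of degree at most seven. -/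
/-- Staggered mean operator: `(μ f)(x) = (f(x+D) + f(x−D))/2`. -/
noncomputable def mu (D : ℝ) (f : ℝ → ℝ) : ℝ → ℝ := fun x => (f (x + D) + f (x - D)) / 2

/-- Staggered difference operator: `(δ f)(x) = f(x+D) − f(x−D)`. -/
noncomputable def de (D : ℝ) (f : ℝ → ℝ) : ℝ → ℝ := fun x => f (x + D) - f (x - D)

/-- The septic coupling operator (the shift expansion truncated through seventh
differences, with coupling label γ = 1) reproduces the shifted value `p(x + rD)`
exactly on polynomials of degree at most seven. -/
theorem septic_coupling_exact_on_septics (D r x : ℝ) (p : Polynomial ℝ)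
    (hp : p.natDegree ≤ 7) :
    p.eval (x + r * D) =
      mu D (fun y => p.eval y) x + (r / 2) * de D (fun y => p.eval y) x
      + ((r ^ 2 - 1) / 8) * mu D (de D (de D (fun y => p.eval y))) x
      + ((r ^ 3 - r) / 48) * de D (de D (de D (fun y => p.eval y))) x
      + ((9 - 10 * r ^ 2 + r ^ 4) / 384) *
          mu D (de D (de D (de D (de D (fun y => p.eval y))))) x
      + ((9 * r - 10 * r ^ 3 + r ^ 5) / 3840) *
          de D (de D (de D (de D (de D (fun y => p.eval y))))) x
      + ((-225 + 259 * r ^ 2 - 35 * r ^ 4 + r ^ 6) / 46080) *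
          mu D (de D (de D (de D (de D (de D (de D (fun y => p.eval y))))))) x
      + ((-225 * r + 259 * r ^ 3 - 35 * r ^ 5 + r ^ 7) / 645120) *
          de D (de D (de D (de D (de D (de D (de D (fun y => p.eval y))))))) x := by
  have eval_eq_sum : ∀ y : ℝ, p.eval y = ∑ i ∈ Finset.range 8, p.coeff i * y ^ i :=
    Polynomial.eval_eq_sum_range' (Nat.lt_succ_of_le hp)
  simp only [mu, de, eval_eq_sum, Finset.sum_range_succ, Finset.sum_range_zero]
  ring
end

section
/- For every real number D, every real r, every real x, and every polynomial function p : ℝ → ℝ of degree at most 4, one has p(x + rD) − p(x − rD) = r(δp)(x) + ((r³ − r)/24)(δ³p)(x). That is, the difference C₊ − C₋ of the cubic coupling operators (with coupling label γ = 1) coincides exactly with the shift difference E^{r/2} − E^{−r/2} on polynomials of degree at most four — the key property of the coupling used in the consistency proof. -/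
/-!
Write `δ = E - E⁻¹` with `E = exp (D ∂)`, so `δ = 2 sinh (D ∂)` and the left-hand side is
`2 sinh (r D ∂) p`. Expanding the odd function `sinh (r t)` in powers of `s = sinh t` gives
`r s + (r³ - r) s³ / 6 + O(s⁵)`, and `δ⁵` annihilates quartics. Concretely, the defect of the
identity is linear in `p`, so it is enough to check it on the monomials `1, X, …, X⁴`, where it
is a polynomial identity in `x`, `r` and `D`.
-/

open Polynomial

noncomputable def couplingDefect (D r x : ℝ) : ℝ[X] →ₗ[ℝ] ℝ where
  toFun p := p.eval (x + r * D) - p.eval (x - r * D) -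
    (r * de D (fun y => p.eval y) x + ((r ^ 3 - r) / 24) * de D (de D (de D (fun y => p.eval y))) x)
  map_add' p q := by simp only [de, eval_add]; ring
  map_smul' c p := by simp only [de, eval_smul, smul_eq_mul, RingHom.id_apply]; ring

theorem couplingDefect_X_pow (D r x : ℝ) {n : ℕ} (hn : n ≤ 4) :
    couplingDefect D r x (X ^ n) = 0 := by
  interval_cases n <;>
    simp only [couplingDefect, LinearMap.coe_mk, AddHom.coe_mk, de, eval_pow, eval_X] <;> ring

theorem degreeLE_four_le_ker_couplingDefect (D r x : ℝ) :
    degreeLE ℝ (4 : ℕ) ≤ LinearMap.ker (couplingDefect D r x) := by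
  classical
  rw [degreeLE_eq_span_X_pow, Submodule.span_le]
  rw [Finset.coe_image, Set.image_subset_iff]
  intro n hn
  exact couplingDefect_X_pow D r x (Nat.lt_succ_iff.1 (Finset.mem_range.1 hn))

/-- The difference `C₊ − C₋ = rδ + ((r³−r)/24)δ³` of the cubic coupling operators
coincides exactly with the shift difference `E^{r/2} − E^{−r/2}` on polynomials
of degree at most four. -/
theorem coupling_difference_exact_on_quartics (D r x : ℝ) (p : Polynomial ℝ)
    (hp : p.natDegree ≤ 4) :
    p.eval (x + r * D) - p.eval (x - r * D) =
      r * de D (fun y => p.eval y) x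
      + ((r ^ 3 - r) / 24) * de D (de D (de D (fun y => p.eval y))) x := by
  have hp' : p ∈ degreeLE ℝ (4 : ℕ) := mem_degreeLE.2 (natDegree_le_iff_degree_le.1 hp)
  exact sub_eq_zero.1 (degreeLE_four_le_ker_couplingDefect D r x hp')
end

section
/- Let D > 0, let r be a real number with |r| < 5, let x be real, and let f : ℝ → ℝ be six times continuously differentiable on [x − 5D, x + 5D]. Then there exists ξ ∈ (x − 5D, x + 5D) such that f(x + rD) − [(μf)(x) + (r/2)(δf)(x) + ((r² − 1)/8)(μδ²f)(x) + ((r³ − r)/48)(δ³f)(x) + ((9 − 10r² + r⁴)/384)(μδ⁴f)(x) + ((9r − 10r³ + r⁵)/3840)(δ⁵f)(x)] = (D⁶/720)(r² − 1)(r² − 9)(r² − 25) f⁽⁶⁾(ξ). In particular, the consistency error of the quintic inter-patch coupling of the gap-tooth scheme is O(D⁶) for smooth fields, uniformly for |r| ≤ 1. -/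
open Set Polynomial
open scoped Nat

namespace Polynomial

theorem iteratedDeriv_eval (p : ℝ[X]) (k : ℕ) (x : ℝ) :
    iteratedDeriv k (fun t => p.eval t) x = (derivative^[k] p).eval x := by
  induction k generalizing p with
  | zero => rfl
  | succ k ih =>
    have hderiv : _root_.deriv (fun t => p.eval t) = fun t => p.derivative.eval t := by
      ext t
      exact p.deriv
    rw [iteratedDeriv_succ', hderiv, ih, Function.iterate_succ_apply]

theorem iterate_derivative_eq_C_of_natDegree_le {R : Type*} [CommSemiring R] {p : R[X]} {k : ℕ}
    (hp : p.natDegree ≤ k) : derivative^[k] p = C (k ! * p.coeff k) := by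
  ext m
  rw [coeff_iterate_derivative, coeff_C]
  rcases Nat.eq_zero_or_pos m with rfl | hm
  · simp [Nat.descFactorial_self, nsmul_eq_mul]
  · rw [if_neg hm.ne', coeff_eq_zero_of_natDegree_lt (by omega), smul_zero]

theorem natDegree_comp_C_mul_X_sub_C_le {R : Type*} [CommRing R] (q : R[X]) (c d : R) :
    (q.comp (C c * (X - C d))).natDegree ≤ q.natDegree := by
  have hlin : (C c * (X - C d)).natDegree ≤ 1 := by compute_degree
  simpa using natDegree_comp_le.trans (Nat.mul_le_mul_left q.natDegree hlin)

theorem eval_comp_C_inv_mul_X_sub_C {K : Type*} [Field K] (q : K[X]) {D : K}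
    (hD : D ≠ 0) (x k : K) : (q.comp (C D⁻¹ * (X - C x))).eval (x + k * D) = q.eval k := by
  rw [eval_comp, eval_mul, eval_C, eval_sub, eval_X, eval_C, add_sub_cancel_left,
    mul_comm k, inv_mul_cancel_left₀ hD]

end Polynomial

-- No differentiability is needed: `deriv g` is `0` wherever `g` is not differentiable.
theorem exists_finset_deriv_eq_zero {g : ℝ → ℝ} {I : Set ℝ} (hI : I.OrdConnected)
    (hg : ContinuousOn g I) {s : Finset ℝ} (hs : ↑s ⊆ I) (hzero : ∀ t ∈ s, g t = 0) :
    ∃ t : Finset ℝ, ↑t ⊆ interior I ∧ (∀ z ∈ t, deriv g z = 0) ∧ s.card ≤ t.card + 1 := by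
  have rolle : ∀ u ∈ s ×ˢ s, u.1 < u.2 → ∃ z ∈ Ioo u.1 u.2, deriv g z = 0 := by
    intro u hu hlt
    rw [Finset.mem_product] at hu
    exact exists_deriv_eq_zero hlt (hg.mono (hI.out (hs hu.1) (hs hu.2)))
      ((hzero _ hu.1).trans (hzero _ hu.2).symm)
  choose! z hz hz' using rolle
  refine ⟨((s ×ˢ s).filter fun u => u.1 < u.2).image z, ?_, ?_, ?_⟩
  · intro w hw
    obtain ⟨u, hu, rfl⟩ := Finset.mem_image.mp (Finset.mem_coe.mp hw)
    rw [Finset.mem_filter, Finset.mem_product] at hu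
    exact interior_mono (hI.out (hs hu.1.1) (hs hu.1.2))
      (by rw [interior_Icc]; exact hz u (Finset.mem_product.mpr hu.1) hu.2)
  · simp only [Finset.mem_image, Finset.mem_filter, forall_exists_index, and_imp]
    rintro _ u hu hlt rfl
    exact hz' u hu hlt
  · refine Finset.card_le_of_interleaved fun a ha b hb hab _ => ⟨z (a, b), ?_, hz (a, b) ?_ hab⟩
    · exact Finset.mem_image_of_mem _ (by simp [ha, hb, hab])
    · exact Finset.mem_product.mpr ⟨ha, hb⟩

theorem exists_mem_interior_iteratedDeriv_eq_zero {I : Set ℝ} (hI : I.OrdConnected) (n : ℕ)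
    {g : ℝ → ℝ} (hgc : ContinuousOn g I) (hg : ContDiffOn ℝ (n + 1) g (interior I))
    {s : Finset ℝ} (hs : ↑s ⊆ I) (hcard : n + 2 ≤ s.card) (hzero : ∀ t ∈ s, g t = 0) :
    ∃ c ∈ interior I, iteratedDeriv (n + 1) g c = 0 := by
  obtain ⟨t, ht, htzero, hst⟩ := exists_finset_deriv_eq_zero hI hgc hs hzero
  induction n generalizing g I s t with
  | zero =>
    obtain ⟨c, hc⟩ := Finset.card_pos.mp (by omega : 0 < t.card)
    exact ⟨c, ht hc, by rw [iteratedDeriv_one]; exact htzero c hc⟩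
  | succ n ih =>
    have hg' : ContDiffOn ℝ (n + 1) (deriv g) (interior I) :=
      hg.deriv_of_isOpen isOpen_interior (by norm_cast)
    obtain ⟨t', ht', ht'zero, htt'⟩ :=
      exists_finset_deriv_eq_zero hI.interior hg'.continuousOn ht htzero
    obtain ⟨c, hc, hc0⟩ := ih hI.interior hg'.continuousOn (by rwa [interior_interior]) ht
      (by omega) htzero t' ht' ht'zero htt'
    exact ⟨c, interior_subset hc, by rwa [iteratedDeriv_succ']⟩

theorem exists_sub_eval_eq_iteratedDeriv_mul_prod {f : ℝ → ℝ} {a b : ℝ} (hab : a < b) {n : ℕ}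
    (hfc : ContinuousOn f (Icc a b)) (hf : ContDiffOn ℝ (n + 1) f (Ioo a b))
    {s : Finset ℝ} (hs : ↑s ⊆ Icc a b) (hcard : s.card = n + 1)
    {p : ℝ[X]} (hp : p.natDegree ≤ n) (hps : ∀ t ∈ s, p.eval t = f t)
    {y : ℝ} (hy : y ∈ Icc a b) :
    ∃ ξ ∈ Ioo a b, f y - p.eval y = iteratedDeriv (n + 1) f ξ / (n + 1)! * ∏ t ∈ s, (y - t) := by
  by_cases hys : y ∈ s
  · obtain ⟨ξ, hξ⟩ := nonempty_Ioo.mpr hab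
    refine ⟨ξ, hξ, ?_⟩
    rw [hps y hys, sub_self, Finset.prod_eq_zero hys (sub_self y), mul_zero]
  set W := Lagrange.nodal s id
  have hWy : W.eval y ≠ 0 := by
    rw [Lagrange.eval_nodal, Finset.prod_ne_zero_iff]
    exact fun t ht => sub_ne_zero.mpr (ne_of_mem_of_not_mem ht hys).symm
  set K := (f y - p.eval y) / W.eval y
  -- `q` interpolates `f` at the nodes and at `y`, and its leading coefficient is `K`.
  set q := p + C K * W
  have hq_natDegree : q.natDegree ≤ n + 1 := by
    refine natDegree_add_le_of_degree_le (hp.trans n.le_succ) ((natDegree_C_mul_le _ _).trans ?_)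
    rw [Lagrange.natDegree_nodal, hcard]
  have hq_coeff : q.coeff (n + 1) = K := by
    have hW : W.coeff (n + 1) = 1 := by
      rw [← hcard, ← Lagrange.natDegree_nodal (v := id)]
      exact Lagrange.nodal_monic.coeff_natDegree
    rw [coeff_add, coeff_C_mul, hW, coeff_eq_zero_of_natDegree_lt (by omega), zero_add, mul_one]
  have hq_smooth : ContDiff ℝ (n + 1) fun t => q.eval t := by
    simpa using q.contDiff_aeval (𝕜 := ℝ) (n + 1)
  have hzero : ∀ t ∈ insert y s, f t - q.eval t = 0 := by
    intro t ht
    rcases Finset.mem_insert.mp ht with rfl | ht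
    · simp only [q, eval_add, eval_mul, eval_C, K]
      field_simp
      ring
    · simp [q, W, hps t ht, Lagrange.eval_nodal, Finset.prod_eq_zero ht (sub_self t)]
  obtain ⟨ξ, hξ, hξ0⟩ := exists_mem_interior_iteratedDeriv_eq_zero ordConnected_Icc n
    (hfc.sub q.continuousOn) (by rw [interior_Icc]; exact hf.sub hq_smooth.contDiffOn)
    (by simpa [insert_subset_iff] using ⟨hy, hs⟩)
    (by rw [Finset.card_insert_of_notMem hys, hcard]) hzero
  rw [interior_Icc] at hξ
  rw [iteratedDeriv_sub (hf.contDiffAt (isOpen_Ioo.mem_nhds hξ)) hq_smooth.contDiffAt,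
    iteratedDeriv_eval, iterate_derivative_eq_C_of_natDegree_le hq_natDegree, eval_C, hq_coeff,
    sub_eq_zero] at hξ0
  refine ⟨ξ, hξ, ?_⟩
  have hWy' : W.eval y = ∏ t ∈ s, (y - t) := Lagrange.eval_nodal
  rw [hξ0, ← hWy', mul_div_cancel_left₀ _ (by positivity), div_mul_cancel₀ _ hWy]

theorem add_mul_mem_Icc {x D k a : ℝ} (hD : 0 ≤ D) (hk : |k| ≤ a) :
    x + k * D ∈ Icc (x - a * D) (x + a * D) := by
  obtain ⟨h1, h2⟩ := abs_le.mp hk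
  constructor <;> nlinarith

noncomputable def quinticCoupling (D : ℝ) (f : ℝ → ℝ) (x : ℝ) : ℝ[X] :=
  C (mu D f x) + C (de D f x / 2) * X + C (mu D (de D (de D f)) x / 8) * (X ^ 2 - 1)
    + C (de D (de D (de D f)) x / 48) * (X ^ 3 - X)
    + C (mu D (de D (de D (de D (de D f)))) x / 384) * (9 - 10 * X ^ 2 + X ^ 4)
    + C (de D (de D (de D (de D (de D f)))) x / 3840) * (9 * X - 10 * X ^ 3 + X ^ 5)

section quinticCoupling

variable (D : ℝ) (f : ℝ → ℝ) (x : ℝ)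

theorem eval_quinticCoupling (r : ℝ) :
    (quinticCoupling D f x).eval r =
      mu D f x + (r / 2) * de D f x
        + ((r ^ 2 - 1) / 8) * mu D (de D (de D f)) x
        + ((r ^ 3 - r) / 48) * de D (de D (de D f)) x
        + ((9 - 10 * r ^ 2 + r ^ 4) / 384) * mu D (de D (de D (de D (de D f)))) x
        + ((9 * r - 10 * r ^ 3 + r ^ 5) / 3840) * de D (de D (de D (de D (de D f)))) x := by
  simp only [quinticCoupling, eval_add, eval_sub, eval_mul, eval_C, eval_X, eval_pow, eval_ofNat,
    eval_one]
  ring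

theorem natDegree_quinticCoupling_le : (quinticCoupling D f x).natDegree ≤ 5 := by
  unfold quinticCoupling
  compute_degree

theorem eval_quinticCoupling_of_mem {k : ℝ} (hk : k ∈ ({-5, -3, -1, 1, 3, 5} : Finset ℝ)) :
    (quinticCoupling D f x).eval k = f (x + k * D) := by
  simp only [Finset.mem_insert, Finset.mem_singleton] at hk
  rcases hk with rfl | rfl | rfl | rfl | rfl | rfl <;>
    · rw [eval_quinticCoupling]
      simp only [mu, de]
      ring_nf

end quinticCoupling

/-- Lagrange remainder for the quintic inter-patch coupling: for `f` six times
continuously differentiable on `[x−5D, x+5D]`, there is `ξ` in `(x−5D, x+5D)`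
with interpolation error `(D⁶/720)(r²−1)(r²−9)(r²−25) f⁽⁶⁾(ξ)`; in particular the
consistency error of the quintic coupling is `O(D⁶)` for smooth fields. -/
theorem quintic_coupling_error (D r x : ℝ) (hD : 0 < D) (hr : |r| < 5) (f : ℝ → ℝ)
    (hf : ContDiffOn ℝ 6 f (Set.Icc (x - 5 * D) (x + 5 * D))) :
    ∃ ξ ∈ Set.Ioo (x - 5 * D) (x + 5 * D),
      f (x + r * D) -
        (mu D f x + (r / 2) * de D f x
          + ((r ^ 2 - 1) / 8) * mu D (de D (de D f)) x
          + ((r ^ 3 - r) / 48) * de D (de D (de D f)) x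
          + ((9 - 10 * r ^ 2 + r ^ 4) / 384) * mu D (de D (de D (de D (de D f)))) x
          + ((9 * r - 10 * r ^ 3 + r ^ 5) / 3840) * de D (de D (de D (de D (de D f)))) x)
      = (D ^ 6 / 720) * (r ^ 2 - 1) * (r ^ 2 - 9) * (r ^ 2 - 25) * iteratedDeriv 6 f ξ := by
  have hgrid : Function.Injective fun k : ℝ => x + k * D := fun k l h => by
    simpa [hD.ne'] using h
  set nodes : Finset ℝ := {-5, -3, -1, 1, 3, 5}
  have hnodes : ∀ k ∈ nodes, |k| ≤ 5 := by norm_num [nodes]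
  obtain ⟨ξ, hξ, herr⟩ := exists_sub_eval_eq_iteratedDeriv_mul_prod (n := 5)
    (s := nodes.image fun k => x + k * D) (p := (quinticCoupling D f x).comp (C D⁻¹ * (X - C x)))
    (by linarith) hf.continuousOn (hf.mono Ioo_subset_Icc_self)
    (by
      rw [Finset.coe_image, Set.image_subset_iff]
      exact fun k hk => add_mul_mem_Icc hD.le (hnodes k hk))
    (by rw [Finset.card_image_of_injective _ hgrid]; norm_num [nodes])
    ((natDegree_comp_C_mul_X_sub_C_le _ _ _).trans (natDegree_quinticCoupling_le D f x))
    (Finset.forall_mem_image.mpr fun k hk => by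
      rw [eval_comp_C_inv_mul_X_sub_C _ hD.ne', eval_quinticCoupling_of_mem D f x hk])
    (add_mul_mem_Icc hD.le hr.le)
  refine ⟨ξ, hξ, ?_⟩
  rw [← eval_quinticCoupling, ← eval_comp_C_inv_mul_X_sub_C _ hD.ne', herr,
    Finset.prod_image hgrid.injOn]
  norm_num [nodes, Finset.prod_insert]
  ring
end
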